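/- arXiv:0911.1119 — 2 statements merged into one kernel-verified Lean document; each statement's English description precedes it below -/
import Mathlib

section
/- Let 0 < t₀ ≤ T₀ < ∞ and A = {(t,T) : 0 ≤ t ≤ t₀, t ≤ T ≤ T₀}. If d : A → ℝ₊ is bounded and satisfies d(t,T) ≤ K ∫₀ᵗ ∫ₛ^T d(s,u) du ds for all (t,T) ∈ A, where 0 < K < ∞, then d ≡ 0 on A. -/
/-!
Iterating the inequality starting from the bound `d ≤ M` gives
`d t T ≤ M (K T₀ t)ⁿ / n!` for every `n`: each round integrates `sⁿ / n!` over `[0, t]`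
and picks up a factor `T₀` from the inner integral over `[s, T]`. Letting `n → ∞` gives `d ≤ 0`.
-/

open MeasureTheory intervalIntegral Set Filter

theorem intervalIntegral.integral_mono_on_of_nonneg {μ : Measure ℝ} {f g : ℝ → ℝ} {a b : ℝ}
    (hab : a ≤ b) (hf : ∀ x ∈ Icc a b, 0 ≤ f x) (hg : IntervalIntegrable g μ a b)
    (h : ∀ x ∈ Icc a b, f x ≤ g x) :
    ∫ x in a..b, f x ∂μ ≤ ∫ x in a..b, g x ∂μ := by
  have hIoc : ∀ x ∈ Ioc a b, x ∈ Icc a b := fun x hx => Ioc_subset_Icc_self hx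
  rw [integral_of_le hab, integral_of_le hab]
  exact integral_mono_of_nonneg
    ((ae_restrict_iff' measurableSet_Ioc).2 (ae_of_all _ fun x hx => hf x (hIoc x hx))) hg.1
    ((ae_restrict_iff' measurableSet_Ioc).2 (ae_of_all _ fun x hx => h x (hIoc x hx)))

section Triangle

variable {t₀ T₀ : ℝ} {d : ℝ → ℝ → ℝ}

theorem integral_integral_le_mul_integral {g : ℝ → ℝ} (hg : Continuous g)
    (hd0 : ∀ t T, 0 ≤ t → t ≤ t₀ → t ≤ T → T ≤ T₀ → 0 ≤ d t T)
    (hdg : ∀ t T, 0 ≤ t → t ≤ t₀ → t ≤ T → T ≤ T₀ → d t T ≤ g t)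
    {t T : ℝ} (h0t : 0 ≤ t) (htt₀ : t ≤ t₀) (htT : t ≤ T) (hTT₀ : T ≤ T₀) :
    ∫ s in (0:ℝ)..t, ∫ u in s..T, d s u ≤ T₀ * ∫ s in (0:ℝ)..t, g s := by
  rw [← intervalIntegral.integral_const_mul]
  refine integral_mono_on_of_nonneg h0t (fun s hs => ?_)
    ((continuous_const.mul hg).intervalIntegrable 0 t) (fun s hs => ?_)
  · exact integral_nonneg (hs.2.trans htT) fun u hu =>
      hd0 s u hs.1 (hs.2.trans htt₀) hu.1 (hu.2.trans hTT₀)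
  · have hst₀ : s ≤ t₀ := hs.2.trans htt₀
    have hsT : s ≤ T := hs.2.trans htT
    have hbound : ∀ u ∈ uIoc s T, ‖d s u‖ ≤ g s := by
      intro u hu
      rw [uIoc_of_le hsT] at hu
      rw [Real.norm_of_nonneg (hd0 s u hs.1 hst₀ hu.1.le (hu.2.trans hTT₀))]
      exact hdg s u hs.1 hst₀ hu.1.le (hu.2.trans hTT₀)
    have hg0 : 0 ≤ g s := (hd0 s T hs.1 hst₀ hsT hTT₀).trans (hdg s T hs.1 hst₀ hsT hTT₀)
    calc ∫ u in s..T, d s u ≤ ‖∫ u in s..T, d s u‖ := Real.le_norm_self _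
      _ ≤ g s * |T - s| := norm_integral_le_of_norm_le_const hbound
      _ ≤ g s * T₀ := by
          gcongr
          rw [abs_of_nonneg (sub_nonneg.2 hsT)]
          linarith [hs.1]
      _ = T₀ * g s := mul_comm _ _

theorem le_mul_pow_div_factorial_of_le_mul_integral_integral {K M : ℝ} (hK : 0 ≤ K)
    (hd0 : ∀ t T, 0 ≤ t → t ≤ t₀ → t ≤ T → T ≤ T₀ → 0 ≤ d t T)
    (hM : ∀ t T, 0 ≤ t → t ≤ t₀ → t ≤ T → T ≤ T₀ → d t T ≤ M)
    (hineq : ∀ t T, 0 ≤ t → t ≤ t₀ → t ≤ T → T ≤ T₀ →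
      d t T ≤ K * ∫ s in (0:ℝ)..t, ∫ u in s..T, d s u) (n : ℕ) :
    ∀ t T, 0 ≤ t → t ≤ t₀ → t ≤ T → T ≤ T₀ →
      d t T ≤ M * ((K * T₀ * t) ^ n / n.factorial) := by
  induction n with
  | zero => simpa using hM
  | succ n ih =>
    intro t T h0t htt₀ htT hTT₀
    have hint : ∫ s in (0:ℝ)..t, M * ((K * T₀ * s) ^ n / n.factorial) =
        M * (K * T₀) ^ n / n.factorial * (t ^ (n + 1) / (n + 1)) := by
      have hpoly : (fun s : ℝ => M * ((K * T₀ * s) ^ n / n.factorial)) =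
          fun s => M * (K * T₀) ^ n / n.factorial * s ^ n := by
        funext s
        rw [mul_pow]
        ring
      rw [hpoly, intervalIntegral.integral_const_mul, integral_pow]
      ring
    calc d t T ≤ K * ∫ s in (0:ℝ)..t, ∫ u in s..T, d s u := hineq t T h0t htt₀ htT hTT₀
      _ ≤ K * (T₀ * ∫ s in (0:ℝ)..t, M * ((K * T₀ * s) ^ n / n.factorial)) := by
          gcongr
          exact integral_integral_le_mul_integral (by fun_prop) hd0 ih h0t htt₀ htT hTT₀
      _ = M * ((K * T₀ * t) ^ (n + 1) / (n + 1).factorial) := by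
          rw [hint, Nat.factorial_succ]
          push_cast
          field_simp
          ring

end Triangle

theorem gronwall_2d_zero_general
    (t₀ T₀ : ℝ)
    (d : ℝ → ℝ → ℝ) (K : ℝ) (hK : 0 < K)
    (hd0 : ∀ t T, 0 ≤ t → t ≤ t₀ → t ≤ T → T ≤ T₀ → 0 ≤ d t T)
    (hbdd : ∃ M : ℝ, ∀ t T, 0 ≤ t → t ≤ t₀ → t ≤ T → T ≤ T₀ → d t T ≤ M)
    (hineq : ∀ t T, 0 ≤ t → t ≤ t₀ → t ≤ T → T ≤ T₀ →
      d t T ≤ K * ∫ s in (0:ℝ)..t, ∫ u in s..T, d s u) :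
    ∀ t T, 0 ≤ t → t ≤ t₀ → t ≤ T → T ≤ T₀ → d t T = 0 := by
  obtain ⟨M, hM⟩ := hbdd
  intro t T h0t htt₀ htT hTT₀
  have hlim : Tendsto (fun n : ℕ => M * ((K * T₀ * t) ^ n / n.factorial)) atTop (nhds 0) := by
    simpa using (FloorSemiring.tendsto_pow_div_factorial_atTop (K * T₀ * t)).const_mul M
  refine le_antisymm (ge_of_tendsto' hlim fun n => ?_) (hd0 t T h0t htt₀ htT hTT₀)
  exact le_mul_pow_div_factorial_of_le_mul_integral_integral hK.le hd0 hM hineq n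
    t T h0t htt₀ htT hTT₀

theorem gronwall_2d_zero
    (t₀ T₀ : ℝ) (ht₀ : 0 < t₀) (hT₀ : t₀ ≤ T₀)
    (d : ℝ → ℝ → ℝ) (K : ℝ) (hK : 0 < K)
    (hd0 : ∀ t T, 0 ≤ t → t ≤ t₀ → t ≤ T → T ≤ T₀ → 0 ≤ d t T)
    (hbdd : ∃ M : ℝ, ∀ t T, 0 ≤ t → t ≤ t₀ → t ≤ T → T ≤ T₀ → d t T ≤ M)
    (hineq : ∀ t T, 0 ≤ t → t ≤ t₀ → t ≤ T → T ≤ T₀ →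
      d t T ≤ K * ∫ s in (0:ℝ)..t, ∫ u in s..T, d s u) :
    ∀ t T, 0 ≤ t → t ≤ t₀ → t ≤ T → T ≤ T₀ → d t T = 0 :=
  gronwall_2d_zero_general t₀ T₀ d K hK hd0 hbdd hineq
end

section
/- If d : A → ℝ₊ is bounded by M and satisfies d(t,T) ≤ K ∫₀ᵗ ∫ₛ^T d(s,u) du ds on A, then for every n ≥ 0 and all (t,T) ∈ A, d(t,T) ≤ M Kⁿ (tT)ⁿ / (n!)². -/
open MeasureTheory intervalIntegral

/-! Induction on `n`. Feeding the bound for `n` into the integral inequality costs a factor `K`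
and the estimate `∫₀ᵗ ∫ₛᵀ (su)ⁿ du ds ≤ (tT)ⁿ⁺¹ / (n+1)²`, obtained by enlarging the inner
range `[s, T]` to `[0, T]`; this turns `(n!)²` into `((n+1)!)²`. -/

/-- Only the majorant needs to be integrable: otherwise `∫ f` is the junk value `0 ≤ ∫ g`. -/
theorem intervalIntegral_le_of_le_of_nonneg {f g : ℝ → ℝ} {a b : ℝ} (hab : a ≤ b)
    (hg : IntervalIntegrable g volume a b) (hg0 : ∀ x ∈ Set.Icc a b, 0 ≤ g x)
    (hfg : ∀ x ∈ Set.Icc a b, f x ≤ g x) :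
    ∫ x in a..b, f x ≤ ∫ x in a..b, g x := by
  by_cases hf : IntervalIntegrable f volume a b
  · exact integral_mono_on hab hf hg hfg
  · rw [integral_undef hf]
    exact integral_nonneg hab hg0

theorem integral_pow_le_of_nonneg {a : ℝ} (ha : 0 ≤ a) (b : ℝ) (n : ℕ) :
    ∫ x in a..b, x ^ n ≤ b ^ (n + 1) / (n + 1) := by
  rw [integral_pow]
  gcongr
  linarith [pow_nonneg ha (n + 1)]

theorem integral_integral_le_of_le_mul_pow {d : ℝ → ℝ → ℝ} {C t T : ℝ} (n : ℕ)
    (hC : 0 ≤ C) (ht : 0 ≤ t) (htT : t ≤ T)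
    (hd : ∀ s u, 0 ≤ s → s ≤ t → s ≤ u → u ≤ T → d s u ≤ C * (s * u) ^ n) :
    ∫ s in (0:ℝ)..t, ∫ u in s..T, d s u ≤ C * (t * T) ^ (n + 1) / (n + 1) ^ 2 := by
  have hT : 0 ≤ T := ht.trans htT
  have hinner : ∀ s ∈ Set.Icc 0 t,
      ∫ u in s..T, d s u ≤ C * T ^ (n + 1) / (n + 1) * s ^ n := by
    rintro s ⟨hs0, hst⟩
    calc ∫ u in s..T, d s u
        ≤ ∫ u in s..T, C * s ^ n * u ^ n := by
          refine intervalIntegral_le_of_le_of_nonneg (hst.trans htT)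
            (Continuous.intervalIntegrable (by fun_prop) _ _) (fun u hu => ?_) (fun u hu => ?_)
          · have := hs0.trans hu.1
            positivity
          · rw [mul_assoc, ← mul_pow]
            exact hd s u hs0 hst hu.1 hu.2
      _ = C * s ^ n * ∫ u in s..T, u ^ n := integral_const_mul _ _
      _ ≤ C * s ^ n * (T ^ (n + 1) / (n + 1)) := by
          gcongr
          exact integral_pow_le_of_nonneg hs0 T n
      _ = C * T ^ (n + 1) / (n + 1) * s ^ n := by ring
  calc ∫ s in (0:ℝ)..t, ∫ u in s..T, d s u
      ≤ ∫ s in (0:ℝ)..t, C * T ^ (n + 1) / (n + 1) * s ^ n :=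
        intervalIntegral_le_of_le_of_nonneg ht (Continuous.intervalIntegrable (by fun_prop) _ _)
          (fun s hs => by have := hs.1; positivity) hinner
    _ = C * T ^ (n + 1) / (n + 1) * (t ^ (n + 1) / (n + 1)) := by
        rw [intervalIntegral.integral_const_mul, integral_pow]
        simp
    _ = C * (t * T) ^ (n + 1) / (n + 1) ^ 2 := by
        field_simp
        ring

theorem gronwall_2d_iterate_general
    (t₀ T₀ : ℝ)
    (d : ℝ → ℝ → ℝ) (K M : ℝ) (hK : 0 < K) (hM : 0 < M)
    (hbdd : ∀ t T, 0 ≤ t → t ≤ t₀ → t ≤ T → T ≤ T₀ → d t T ≤ M)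
    (hineq : ∀ t T, 0 ≤ t → t ≤ t₀ → t ≤ T → T ≤ T₀ →
      d t T ≤ K * ∫ s in (0:ℝ)..t, ∫ u in s..T, d s u) :
    ∀ n : ℕ, ∀ t T, 0 ≤ t → t ≤ t₀ → t ≤ T → T ≤ T₀ →
      d t T ≤ M * K ^ n * (t * T) ^ n / ((Nat.factorial n : ℝ)) ^ 2 := by
  intro n
  induction n with
  | zero => simpa using hbdd
  | succ n ih =>
    intro t T ht htt₀ htT hTT₀
    have hiter := integral_integral_le_of_le_mul_pow (d := d) n
      (C := M * K ^ n / (Nat.factorial n : ℝ) ^ 2) (by positivity) ht htT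
      fun s u hs hst hsu huT =>
        (ih s u hs (hst.trans htt₀) hsu (huT.trans hTT₀)).trans_eq (by ring)
    calc d t T ≤ K * ∫ s in (0:ℝ)..t, ∫ u in s..T, d s u := hineq t T ht htt₀ htT hTT₀
      _ ≤ K * (M * K ^ n / (Nat.factorial n : ℝ) ^ 2 * (t * T) ^ (n + 1) / (n + 1) ^ 2) := by
        gcongr
      _ = M * K ^ (n + 1) * (t * T) ^ (n + 1) / ((Nat.factorial (n + 1) : ℝ)) ^ 2 := by
        push_cast [Nat.factorial_succ]
        field_simp
        ring

theorem gronwall_2d_iterate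
    (t₀ T₀ : ℝ) (ht₀ : 0 < t₀) (hT₀ : t₀ ≤ T₀)
    (d : ℝ → ℝ → ℝ) (K M : ℝ) (hK : 0 < K) (hM : 0 < M)
    (hd0 : ∀ t T, 0 ≤ t → t ≤ t₀ → t ≤ T → T ≤ T₀ → 0 ≤ d t T)
    (hbdd : ∀ t T, 0 ≤ t → t ≤ t₀ → t ≤ T → T ≤ T₀ → d t T ≤ M)
    (hineq : ∀ t T, 0 ≤ t → t ≤ t₀ → t ≤ T → T ≤ T₀ →
      d t T ≤ K * ∫ s in (0:ℝ)..t, ∫ u in s..T, d s u) :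
    ∀ n : ℕ, ∀ t T, 0 ≤ t → t ≤ t₀ → t ≤ T → T ≤ T₀ →
      d t T ≤ M * K ^ n * (t * T) ^ n / ((Nat.factorial n : ℝ)) ^ 2 :=
  gronwall_2d_iterate_general t₀ T₀ d K M hK hM hbdd hineq
end
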